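/- (Zames–Falb hard IQC) Let f ∈ S(m,L) with ∇f(y_⋆) = 0, and let h_1, ..., h_s ≥ 0 with Σ h_τ ≤ 1. For any sequence y_0, y_1, ... in ℝ^d, writing ỹ_k = y_k - y_⋆ and ũ_k = ∇f(y_k), we have for every k ≥ 0: Σ_{t=0}^{k} (ũ_t - mỹ_t)ᵀ( L(ỹ_t - Σ_{τ=1}^{min(t,s)} h_τ ỹ_{t-τ}) - (ũ_t - Σ_{τ=1}^{min(t,s)} h_τ ũ_{t-τ}) ) ≥ 0. -/

import Mathlib

/-!
Subtracting `m / 2 * ‖· - y⋆‖²` from `f` leaves a convex function `g` whose gradient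
`q = ∇f - m • (· - y⋆)` is `(L - m)`-smooth and vanishes at `y⋆`. By the interpolation inequality
for `g`, `φ a = (L - m) * (g a - g y⋆) - ‖q a‖² / 2` is a nonnegative storage function with
`⟪q a, (L - m) • (b - y⋆) - q b⟫ ≤ ⟪q a, (L - m) • (a - y⋆) - q a⟫ - φ a + φ b`.
Averaging over `b = y (t - τ)` with the weights `h τ` bounds the `t`-th summand below by
`φ (y t) - ∑ τ, h τ * φ (y (t - τ))`, and these have nonnegative sum because each `φ (y j)` is
subtracted with total weight at most `∑ τ, h τ ≤ 1`.
-/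

open RealInnerProductSpace Finset

theorem sum_range_ite_le_sub_eq (φ : ℕ → ℝ) (τ n : ℕ) :
    ∑ t ∈ range n, (if τ ≤ t then φ (t - τ) else 0) = ∑ j ∈ range (n - τ), φ j := by
  induction n with
  | zero => simp
  | succ n ih =>
    rw [sum_range_succ, ih]
    split_ifs with hτ
    · rw [Nat.sub_add_comm hτ, sum_range_succ]
    · rw [add_zero, Nat.sub_eq_zero_of_le (by omega), Nat.sub_eq_zero_of_le (by omega)]

theorem sum_sum_Icc_min_mul_sub_le (s n : ℕ) (h φ : ℕ → ℝ) (hh : ∀ τ, 0 ≤ h τ)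
    (hφ : ∀ j, 0 ≤ φ j) :
    ∑ t ∈ range n, ∑ τ ∈ Icc 1 (min t s), h τ * φ (t - τ)
      ≤ (∑ τ ∈ Icc 1 s, h τ) * ∑ j ∈ range n, φ j := by
  have hIcc : ∀ t, Icc 1 (min t s) = {τ ∈ Icc 1 s | τ ≤ t} := by
    intro t; ext τ; simp only [mem_Icc, mem_filter, le_min_iff]; tauto
  calc ∑ t ∈ range n, ∑ τ ∈ Icc 1 (min t s), h τ * φ (t - τ)
      = ∑ τ ∈ Icc 1 s, h τ * ∑ t ∈ range n, (if τ ≤ t then φ (t - τ) else 0) := by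
        simp_rw [hIcc, sum_filter, mul_sum, mul_ite, mul_zero]
        exact sum_comm
    _ ≤ ∑ τ ∈ Icc 1 s, h τ * ∑ j ∈ range n, φ j := by
        refine sum_le_sum fun τ _ => mul_le_mul_of_nonneg_left ?_ (hh τ)
        rw [sum_range_ite_le_sub_eq]
        exact sum_le_sum_of_subset_of_nonneg (range_subset_range.mpr (Nat.sub_le n τ))
          fun j _ _ => hφ j
    _ = (∑ τ ∈ Icc 1 s, h τ) * ∑ j ∈ range n, φ j := (sum_mul ..).symm

theorem sub_sum_mul_le_sub_sum_mul {ι : Type*} (S : Finset ι) (w p d : ι → ℝ) {A P : ℝ}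
    (hw : ∀ i ∈ S, 0 ≤ w i) (hw1 : ∑ i ∈ S, w i ≤ 1) (hP : P ≤ A)
    (hd : ∀ i ∈ S, d i ≤ A - P + p i) :
    P - ∑ i ∈ S, w i * p i ≤ A - ∑ i ∈ S, w i * d i := by
  have hsum : ∑ i ∈ S, w i * d i ≤ (∑ i ∈ S, w i) * (A - P) + ∑ i ∈ S, w i * p i := by
    rw [sum_mul, ← sum_add_distrib]
    exact sum_le_sum fun i hi => by nlinarith [hw i hi, hd i hi]
  nlinarith [sum_nonneg hw]

theorem zames_falb_sum_nonneg (s k : ℕ) (h φ : ℕ → ℝ) (D : ℕ → ℕ → ℝ) (hh : ∀ τ, 0 ≤ h τ)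
    (hsum : ∑ τ ∈ Icc 1 s, h τ ≤ 1) (hφ : ∀ j, 0 ≤ φ j) (hdiag : ∀ t, φ t ≤ D t t)
    (hcross : ∀ t j, D t j ≤ D t t - φ t + φ j) :
    0 ≤ ∑ t ∈ range (k + 1), (D t t - ∑ τ ∈ Icc 1 (min t s), h τ * D t (t - τ)) := by
  have hstep : ∀ t, φ t - ∑ τ ∈ Icc 1 (min t s), h τ * φ (t - τ)
      ≤ D t t - ∑ τ ∈ Icc 1 (min t s), h τ * D t (t - τ) := fun t =>
    sub_sum_mul_le_sub_sum_mul _ _ _ _ (fun τ _ => hh τ)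
      ((sum_le_sum_of_subset_of_nonneg (Icc_subset_Icc le_rfl (min_le_right t s))
        fun τ _ _ => hh τ).trans hsum) (hdiag t) fun τ _ => hcross t (t - τ)
  have hdouble := sum_sum_Icc_min_mul_sub_le s (k + 1) h φ hh hφ
  calc 0 ≤ (1 - ∑ τ ∈ Icc 1 s, h τ) * ∑ j ∈ range (k + 1), φ j :=
        mul_nonneg (sub_nonneg.mpr hsum) (sum_nonneg fun j _ => hφ j)
    _ ≤ ∑ t ∈ range (k + 1), (φ t - ∑ τ ∈ Icc 1 (min t s), h τ * φ (t - τ)) := by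
        rw [sum_sub_distrib]; linarith
    _ ≤ _ := sum_le_sum fun t _ => hstep t

section Gradient

variable {𝕜 F : Type*} [RCLike 𝕜] [NormedAddCommGroup F] [InnerProductSpace 𝕜 F]
  [CompleteSpace F] {f g : F → 𝕜} {f' g' x : F}

theorem HasGradientAt.neg (hf : HasGradientAt f f' x) :
    HasGradientAt (fun u => -f u) (-f') x := by
  rw [hasGradientAt_iff_hasFDerivAt, map_neg]
  exact hf.hasFDerivAt.neg

theorem HasGradientAt.sub (hf : HasGradientAt f f' x) (hg : HasGradientAt g g' x) :
    HasGradientAt (fun u => f u - g u) (f' - g') x := by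
  rw [hasGradientAt_iff_hasFDerivAt, map_sub]
  exact hf.hasFDerivAt.sub hg.hasFDerivAt

end Gradient

variable {E : Type*} [NormedAddCommGroup E] [InnerProductSpace ℝ E] [CompleteSpace E]

theorem hasGradientAt_mul_norm_sub_sq (m : ℝ) (c x : E) :
    HasGradientAt (fun u => m / 2 * ‖u - c‖ ^ 2) (m • (x - c)) x := by
  rw [hasGradientAt_iff_hasFDerivAt]
  refine ((((hasFDerivAt_id x).sub_const c).norm_sq).const_mul (m / 2)).congr_fderiv ?_
  ext v
  simp only [smul_apply, ContinuousLinearMap.comp_id, id_eq, coe_innerSL_apply, nsmul_eq_mul,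
    smul_eq_mul, InnerProductSpace.toDual_apply_apply, real_inner_smul_left]
  ring

/-- The descent lemma. -/
theorem sub_sub_inner_le_of_inner_sub_le {g : E → ℝ} {q : E → E} {c : ℝ}
    (hg : ∀ u, HasGradientAt g (q u) u) (hq : ∀ a b, ⟪q a - q b, a - b⟫ ≤ c * ‖a - b‖ ^ 2)
    (x z : E) : g z - g x - ⟪q x, z - x⟫ ≤ c / 2 * ‖z - x‖ ^ 2 := by
  set v := z - x
  let G : ℝ → ℝ := fun t => g (x + t • v) - t * ⟪q x, v⟫ - c / 2 * t ^ 2 * ‖v‖ ^ 2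
  have hG : ∀ t, HasDerivAt G (⟪q (x + t • v), v⟫ - ⟪q x, v⟫ - c * t * ‖v‖ ^ 2) t := by
    intro t
    have hline : HasDerivAt (fun t : ℝ => x + t • v) v t := by
      simpa using ((hasDerivAt_id t).smul_const v).const_add x
    have hgt : HasDerivAt (fun t : ℝ => g (x + t • v)) ⟪q (x + t • v), v⟫ t :=
      (hg _).hasFDerivAt.comp_hasDerivAt t hline
    have h := (hgt.sub ((hasDerivAt_id' t).mul_const ⟪q x, v⟫)).sub
      (((hasDerivAt_pow 2 t).const_mul (c / 2)).mul_const (‖v‖ ^ 2))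
    exact h.congr_deriv (by push_cast; ring)
  have hG' : ∀ t : ℝ, 0 < t → ⟪q (x + t • v), v⟫ - ⟪q x, v⟫ - c * t * ‖v‖ ^ 2 ≤ 0 := by
    intro t ht
    have h := hq (x + t • v) x
    rw [add_sub_cancel_left, real_inner_smul_right, norm_smul, Real.norm_of_nonneg ht.le,
      inner_sub_left] at h
    nlinarith
  have hanti : AntitoneOn G (Set.Icc 0 1) := by
    refine antitoneOn_of_deriv_nonpos (convex_Icc 0 1)
      (fun t _ => (hG t).continuousAt.continuousWithinAt)
      (fun t _ => (hG t).differentiableAt.differentiableWithinAt) fun t ht => ?_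
    rw [interior_Icc] at ht
    exact (hG t).deriv ▸ hG' t ht.1
  have h01 := hanti (Set.left_mem_Icc.mpr zero_le_one) (Set.right_mem_Icc.mpr zero_le_one)
    zero_le_one
  simp only [G, zero_smul, add_zero, zero_mul, sub_zero, one_smul, one_mul, one_pow,
    zero_pow two_ne_zero, mul_zero, add_sub_cancel, v] at h01
  linarith

theorem le_sub_sub_inner_of_le_inner_sub {g : E → ℝ} {q : E → E} {c : ℝ}
    (hg : ∀ u, HasGradientAt g (q u) u) (hq : ∀ a b, c * ‖a - b‖ ^ 2 ≤ ⟪q a - q b, a - b⟫)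
    (x z : E) : c / 2 * ‖z - x‖ ^ 2 ≤ g z - g x - ⟪q x, z - x⟫ := by
  have h := sub_sub_inner_le_of_inner_sub_le (q := fun u => -q u) (c := -c)
    (fun u => (hg u).neg) (fun a b => by rw [← neg_sub', inner_neg_left]; linarith [hq a b]) x z
  rw [inner_neg_left] at h
  linarith

/-- The interpolation inequality for smooth convex functions, scaled by `Lp`. -/
theorem mul_sub_add_norm_sub_sq_le {g : E → ℝ} {q : E → E} {Lp : ℝ} (hLp : 0 < Lp)
    (hg : ∀ u, HasGradientAt g (q u) u) (hmono : ∀ a b, 0 ≤ ⟪q a - q b, a - b⟫)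
    (hub : ∀ a b, ⟪q a - q b, a - b⟫ ≤ Lp * ‖a - b‖ ^ 2) (a b : E) :
    Lp * (g a - g b) + ‖q a - q b‖ ^ 2 / 2 ≤ Lp * ⟪q a, a - b⟫ := by
  set δ := q b - q a
  have hconv := le_sub_sub_inner_of_le_inner_sub (c := 0) hg (by simpa using hmono) a
    (b - Lp⁻¹ • δ)
  have hdesc := sub_sub_inner_le_of_inner_sub_le hg hub b (b - Lp⁻¹ • δ)
  rw [show b - Lp⁻¹ • δ - a = (b - a) - Lp⁻¹ • δ by abel, inner_sub_right,
    real_inner_smul_right, zero_div, zero_mul] at hconv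
  rw [sub_sub_cancel_left, inner_neg_right, real_inner_smul_right, norm_neg, norm_smul, mul_pow,
    Real.norm_of_nonneg (inv_nonneg.mpr hLp.le)] at hdesc
  have hδ : ⟪q b, δ⟫ - ⟪q a, δ⟫ = ‖δ‖ ^ 2 := by
    rw [← inner_sub_left, real_inner_self_eq_norm_sq]
  rw [norm_sub_rev, ← neg_sub b a, inner_neg_right]
  field_simp at hconv hdesc
  linarith

section Convex

variable {g : E → ℝ} {q : E → E} {Lp : ℝ}

/-- The interpolation inequality rearranged as a dissipation inequality for the storage function
`Lp * (g a - g x₀) - ‖q a‖ ^ 2 / 2`. -/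
theorem inner_smul_sub_sub_le (hLp : 0 < Lp) (hg : ∀ u, HasGradientAt g (q u) u)
    (hmono : ∀ a b, 0 ≤ ⟪q a - q b, a - b⟫) (hub : ∀ a b, ⟪q a - q b, a - b⟫ ≤ Lp * ‖a - b‖ ^ 2)
    (x₀ a b : E) :
    ⟪q a, Lp • (b - x₀) - q b⟫ ≤ ⟪q a, Lp • (a - x₀) - q a⟫
      - (Lp * (g a - g x₀) - ‖q a‖ ^ 2 / 2) + (Lp * (g b - g x₀) - ‖q b‖ ^ 2 / 2) := by
  have hinterp := mul_sub_add_norm_sub_sq_le hLp hg hmono hub a b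
  have hdiff : ⟪q a, Lp • (a - x₀) - q a⟫ - ⟪q a, Lp • (b - x₀) - q b⟫
      = Lp * ⟪q a, a - b⟫ - ‖q a‖ ^ 2 + ⟪q a, q b⟫ := by
    rw [← inner_sub_right, show Lp • (a - x₀) - q a - (Lp • (b - x₀) - q b)
      = Lp • (a - b) - (q a - q b) by module, inner_sub_right, real_inner_smul_right,
      inner_sub_right (q a) (q a), real_inner_self_eq_norm_sq]
    ring
  rw [norm_sub_sq_real] at hinterp
  linarith

theorem zames_falb_iqc_of_convex (hLp : 0 < Lp) (hg : ∀ u, HasGradientAt g (q u) u)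
    (hmono : ∀ a b, 0 ≤ ⟪q a - q b, a - b⟫) (hub : ∀ a b, ⟪q a - q b, a - b⟫ ≤ Lp * ‖a - b‖ ^ 2)
    {x₀ : E} (hx₀ : q x₀ = 0) (s : ℕ) (h : ℕ → ℝ) (hh : ∀ τ, 0 ≤ h τ)
    (hsum : ∑ τ ∈ Icc 1 s, h τ ≤ 1) (y : ℕ → E) (k : ℕ) :
    0 ≤ ∑ t ∈ range (k + 1), ⟪q (y t), (Lp • (y t - x₀) - q (y t))
      - ∑ τ ∈ Icc 1 (min t s), h τ • (Lp • (y (t - τ) - x₀) - q (y (t - τ)))⟫ := by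
  have key := inner_smul_sub_sub_le hLp hg hmono hub x₀
  have hnonneg : ∀ b, 0 ≤ Lp * (g b - g x₀) - ‖q b‖ ^ 2 / 2 := fun b => by
    simpa [hx₀] using key x₀ b
  have hdiag : ∀ a, Lp * (g a - g x₀) - ‖q a‖ ^ 2 / 2 ≤ ⟪q a, Lp • (a - x₀) - q a⟫ := fun a => by
    simpa [hx₀] using key a x₀
  refine (zames_falb_sum_nonneg s k h _ _ hh hsum (fun j => hnonneg (y j)) (fun t => hdiag (y t))
    fun t j => key (y t) (y j)).trans_eq (sum_congr rfl fun t _ => ?_)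
  simp only [inner_sub_right (q (y t)) _ (∑ _ ∈ _, _), inner_sum, real_inner_smul_right]

end Convex

theorem zames_falb_hard_iqc_general {d : ℕ} (m L : ℝ) (hmL : m < L)
    (s : ℕ) (h : ℕ → ℝ) (hpos : ∀ τ, 0 ≤ h τ) (hsum : ∑ τ ∈ Icc 1 s, h τ ≤ 1)
    (f : EuclideanSpace ℝ (Fin d) → ℝ)
    (gf : EuclideanSpace ℝ (Fin d) → EuclideanSpace ℝ (Fin d))
    (hgrad : ∀ x, HasGradientAt f (gf x) x)
    (hlow : ∀ x y, m * ‖x - y‖ ^ 2 ≤ ⟪gf x - gf y, x - y⟫)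
    (hup : ∀ x y, ⟪gf x - gf y, x - y⟫ ≤ L * ‖x - y‖ ^ 2)
    (ystar : EuclideanSpace ℝ (Fin d)) (hstar : gf ystar = 0)
    (y : ℕ → EuclideanSpace ℝ (Fin d)) :
    ∀ k : ℕ,
      0 ≤ ∑ t ∈ range (k + 1),
        ⟪gf (y t) - m • (y t - ystar),
          L • ((y t - ystar) - ∑ τ ∈ Icc 1 (min t s), h τ • (y (t - τ) - ystar))
            - (gf (y t) - ∑ τ ∈ Icc 1 (min t s), h τ • gf (y (t - τ)))⟫ := by
  intro k
  set q := fun u => gf u - m • (u - ystar)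
  have hgq : ∀ u, HasGradientAt (fun v => f v - m / 2 * ‖v - ystar‖ ^ 2) (q u) u := fun u =>
    (hgrad u).sub (hasGradientAt_mul_norm_sub_sq m ystar u)
  have hq : ∀ a b, ⟪q a - q b, a - b⟫ = ⟪gf a - gf b, a - b⟫ - m * ‖a - b‖ ^ 2 := fun a b => by
    rw [show q a - q b = gf a - gf b - m • (a - b) by simp only [q]; module, inner_sub_left,
      real_inner_smul_left, real_inner_self_eq_norm_sq]
  have hmono : ∀ a b, 0 ≤ ⟪q a - q b, a - b⟫ := fun a b => by rw [hq]; linarith [hlow a b]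
  have hub : ∀ a b, ⟪q a - q b, a - b⟫ ≤ (L - m) * ‖a - b‖ ^ 2 := fun a b => by
    rw [hq]; linarith [hup a b]
  have hqstar : q ystar = 0 := by simp [q, hstar]
  have hshift : ∀ u, (L - m) • (u - ystar) - q u = L • (u - ystar) - gf u := fun u => by
    simp only [q]; module
  refine (zames_falb_iqc_of_convex (sub_pos.mpr hmL) hgq hmono hub hqstar s h hpos hsum y
    k).trans_eq (sum_congr rfl fun t _ => ?_)
  simp only [hshift]
  congr 1
  simp only [smul_sub, smul_sum, sum_sub_distrib, smul_smul, mul_comm L]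
  abel

/-- The Zames–Falb hard IQC satisfied by the gradient of `f ∈ S(m,L)` at its
minimizer, for nonnegative weights `h₁,…,h_s` summing to at most one. -/
theorem zames_falb_hard_iqc {d : ℕ} (m L : ℝ) (hm : 0 < m) (hmL : m < L)
    (s : ℕ) (h : ℕ → ℝ) (hpos : ∀ τ, 0 ≤ h τ) (hsum : ∑ τ ∈ Icc 1 s, h τ ≤ 1)
    (f : EuclideanSpace ℝ (Fin d) → ℝ)
    (gf : EuclideanSpace ℝ (Fin d) → EuclideanSpace ℝ (Fin d))
    (hgrad : ∀ x, HasGradientAt f (gf x) x)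
    (hlow : ∀ x y, m * ‖x - y‖ ^ 2 ≤ ⟪gf x - gf y, x - y⟫)
    (hup : ∀ x y, ⟪gf x - gf y, x - y⟫ ≤ L * ‖x - y‖ ^ 2)
    (ystar : EuclideanSpace ℝ (Fin d)) (hstar : gf ystar = 0)
    (y : ℕ → EuclideanSpace ℝ (Fin d)) :
    ∀ k : ℕ,
      0 ≤ ∑ t ∈ range (k + 1),
        ⟪gf (y t) - m • (y t - ystar),
          L • ((y t - ystar) - ∑ τ ∈ Icc 1 (min t s), h τ • (y (t - τ) - ystar))
            - (gf (y t) - ∑ τ ∈ Icc 1 (min t s), h τ • gf (y (t - τ)))⟫ :=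
  zames_falb_hard_iqc_general m L hmL s h hpos hsum f gf hgrad hlow hup ystar hstar y
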